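/- arXiv:2201.02248 — 4 statements merged into one kernel-verified Lean document; each statement's English description precedes it below -/
import Mathlib

section
/- Let n ≥ 2 and let π : Fin n → ℝ be defined by π i = (1 / d i) / (∑ j, 1 / d j), where d : Fin n → ℝ is positive (the degree function of a connected undirected graph) and p i j = A i j / d i with A : Fin n → Fin n → ℝ a symmetric matrix with nonnegative entries (A i j = A j i). Then π satisfies ∑ i, π i = 1 and, for every i, π i = (1 - ∑ j, p j i) * π i + ∑ j, p i j * π j. -/
/-! The inverse-degree vector is in detailed balance with the random walk `p i j = A i j / d i`:
both `p j i * π i` and `p i j * π j` equal `A i j / (d i * d j)` up to the normalizing constant,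
by symmetry of `A`. Detailed balance makes the outflow `(∑ j, p j i) * π i` of every node equal to
its inflow `∑ j, p i j * π j`, which is the harmonic equation. -/

open Finset

variable {ι R : Type*}

theorem eq_sub_outflow_add_inflow_of_detailed_balance [Fintype ι] [CommRing R]
    {p : ι → ι → R} {π : ι → R} (hbal : ∀ i j, p j i * π i = p i j * π j) (i : ι) :
    π i = (1 - ∑ j, p j i) * π i + ∑ j, p i j * π j := by
  rw [sub_mul, one_mul, sum_mul, sum_congr rfl fun j _ => hbal i j]
  ring

theorem detailed_balance_div_inv_weight [Field R] {A : ι → ι → R} (hA : ∀ i j, A i j = A j i)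
    (d : ι → R) (c : R) (i j : ι) :
    A j i / d j * (c / d i) = A i j / d i * (c / d j) := by
  rw [hA j i]
  ring

theorem stmt_3_general (n : ℕ) (hn : 2 ≤ n)
    (d : Fin n → ℝ) (hd : ∀ i, 0 < d i)
    (A : Fin n → Fin n → ℝ)
    (hAsymm : ∀ i j, A i j = A j i)
    (p : Fin n → Fin n → ℝ) (hp : ∀ i j, p i j = A i j / d i)
    (π : Fin n → ℝ)
    (hπ : ∀ i, π i = (1 / d i) / (∑ j, 1 / d j)) :
    (∑ i, π i = 1) ∧
      ∀ i, π i = (1 - ∑ j, p j i) * π i + ∑ j, p i j * π j := by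
  have hS : 0 < ∑ j, 1 / d j :=
    sum_pos (fun j _ => one_div_pos.mpr (hd j)) ⟨⟨0, by omega⟩, mem_univ _⟩
  have hπ' : ∀ i, π i = (∑ j, 1 / d j)⁻¹ / d i := fun i => by rw [hπ]; ring
  refine ⟨?_, eq_sub_outflow_add_inflow_of_detailed_balance fun i j => ?_⟩
  · rw [sum_congr rfl fun i _ => hπ i, ← sum_div, div_self hS.ne']
  · rw [hp, hp, hπ', hπ']
    exact detailed_balance_div_inv_weight hAsymm d _ i j

theorem stmt_3 (n : ℕ) (hn : 2 ≤ n)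
    (d : Fin n → ℝ) (hd : ∀ i, 0 < d i)
    (A : Fin n → Fin n → ℝ)
    (hAnn : ∀ i j, 0 ≤ A i j) (hAsymm : ∀ i j, A i j = A j i)
    (p : Fin n → Fin n → ℝ) (hp : ∀ i j, p i j = A i j / d i)
    (π : Fin n → ℝ)
    (hπ : ∀ i, π i = (1 / d i) / (∑ j, 1 / d j)) :
    (∑ i, π i = 1) ∧
      ∀ i, π i = (1 - ∑ j, p j i) * π i + ∑ j, p i j * π j :=
  stmt_3_general n hn d hd A hAsymm p hp π hπ
end

section
/- Let f : Finset V → ℝ (V a finite type) be monotone (S ⊆ T → f S ≤ f T), submodular (f S + f T ≥ f (S ∪ T) + f (S ∩ T)), and satisfy f ∅ ≥ 0. Let k ≤ |V| and let S₀ ⊂ S₁ ⊂ ⋯ ⊂ S_k be the greedy sequence: S₀ = ∅ and S_{i+1} = S_i ∪ {u_i} where u_i maximizes f (S_i ∪ {u}) over u ∉ S_i. Then f S_k ≥ (1 − (1 − 1/k)^k) · max {f S | S.card ≤ k} ≥ (1 − 1/e) · max {f S | S.card ≤ k}. -/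
lemma marg_sum {V : Type*} [DecidableEq V]
    (f : Finset V → ℝ)
    (hmono : ∀ S T : Finset V, S ⊆ T → f S ≤ f T)
    (hsub : ∀ S T : Finset V, f (S ∪ T) + f (S ∩ T) ≤ f S + f T)
    (s : Finset V) (A : Finset V) :
    f (s ∪ A) ≤ f s + ∑ v ∈ A, (f (insert v s) - f s) := by
  induction A using Finset.induction with
  | empty => simp
  | @insert a A' ha ih =>
    have key := hsub (s ∪ A') (insert a s)
    have h1 : (s ∪ A') ∪ insert a s = s ∪ insert a A' := by
      ext x; simp; tauto
    have h2 : f s ≤ f ((s ∪ A') ∩ insert a s) := by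
      apply hmono; intro x hx; simp [hx]
    rw [h1] at key
    rw [Finset.sum_insert ha]
    linarith

theorem stmt_11 {V : Type*} [Fintype V] [DecidableEq V]
    (f : Finset V → ℝ)
    (hmono : ∀ S T : Finset V, S ⊆ T → f S ≤ f T)
    (hsub : ∀ S T : Finset V, f (S ∪ T) + f (S ∩ T) ≤ f S + f T)
    (hempty : 0 ≤ f ∅)
    (k : ℕ) (hk1 : 1 ≤ k) (hk : k ≤ Fintype.card V)
    (S : ℕ → Finset V) (hS0 : S 0 = ∅)
    (hgreedy : ∀ i < k, ∃ u ∉ S i, S (i + 1) = insert u (S i) ∧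
      ∀ v ∉ S i, f (insert v (S i)) ≤ f (insert u (S i))) :
    ∀ T : Finset V, T.card ≤ k →
      (1 - (1 - 1 / (k : ℝ)) ^ k) * f T ≤ f (S k) ∧
      (1 - 1 / Real.exp 1) * f T ≤ f (S k) := by
  intro T hT
  have hkpos : (0:ℝ) < k := by exact_mod_cast hk1
  have hcnn : (0:ℝ) ≤ 1 - 1 / (k:ℝ) := by
    rw [sub_nonneg, div_le_one hkpos]; exact_mod_cast hk1
  have hTnn : 0 ≤ f T := le_trans hempty (hmono _ _ (Finset.empty_subset T))
  -- key step inequality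
  have step : ∀ i < k, f T - f (S (i+1)) ≤ (1 - 1/(k:ℝ)) * (f T - f (S i)) := by
    intro i hi
    obtain ⟨u, hu, hSi1, hmax⟩ := hgreedy i hi
    have hmono' : f (S i) ≤ f (S (i+1)) := by
      rw [hSi1]; exact hmono _ _ (Finset.subset_insert _ _)
    have hms := marg_sum f hmono hsub (S i) (T \ S i)
    have hTsub : f T ≤ f (S i ∪ (T \ S i)) := by
      apply hmono; intro x hx
      by_cases h : x ∈ S i <;> simp [h, hx]
    have hsumle : ∑ v ∈ T \ S i, (f (insert v (S i)) - f (S i))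
        ≤ (T \ S i).card * (f (S (i+1)) - f (S i)) := by
      calc ∑ v ∈ T \ S i, (f (insert v (S i)) - f (S i))
          ≤ ∑ _v ∈ T \ S i, (f (S (i+1)) - f (S i)) := by
            apply Finset.sum_le_sum
            intro v hv
            have hv' : v ∉ S i := (Finset.mem_sdiff.mp hv).2
            have := hmax v hv'
            rw [hSi1]; linarith
        _ = (T \ S i).card * (f (S (i+1)) - f (S i)) := by
            rw [Finset.sum_const, nsmul_eq_mul]
    have hcard : ((T \ S i).card : ℝ) ≤ (k:ℝ) := by
      exact_mod_cast le_trans (Finset.card_le_card (Finset.sdiff_subset)) hT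
    have hgain : 0 ≤ f (S (i+1)) - f (S i) := by linarith
    have : f T ≤ f (S i) + (k:ℝ) * (f (S (i+1)) - f (S i)) := by
      nlinarith [mul_le_mul_of_nonneg_right hcard hgain]
    have key : (f T - f (S i)) / (k:ℝ) ≤ f (S (i+1)) - f (S i) := by
      rw [div_le_iff₀ hkpos]; nlinarith
    have expand : (1 - 1/(k:ℝ)) * (f T - f (S i))
        = (f T - f (S i)) - (f T - f (S i)) / (k:ℝ) := by ring
    linarith [expand ▸ le_refl ((1 - 1/(k:ℝ)) * (f T - f (S i)))]
  -- gap induction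
  have gap : ∀ i ≤ k, f T - f (S i) ≤ (1 - 1/(k:ℝ))^i * f T := by
    intro i
    induction i with
    | zero => intro _; simp [hS0]; linarith
    | succ n ih =>
      intro hn
      have hn' : n < k := hn
      have h1 := step n hn'
      have h2 := ih (le_of_lt hn')
      calc f T - f (S (n+1)) ≤ (1 - 1/(k:ℝ)) * (f T - f (S n)) := h1
        _ ≤ (1 - 1/(k:ℝ)) * ((1 - 1/(k:ℝ))^n * f T) := by
            exact mul_le_mul_of_nonneg_left h2 hcnn
        _ = (1 - 1/(k:ℝ))^(n+1) * f T := by ring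
  have main := gap k le_rfl
  have first : (1 - (1 - 1 / (k:ℝ)) ^ k) * f T ≤ f (S k) := by nlinarith
  refine ⟨first, ?_⟩
  -- (1 - 1/k)^k ≤ 1/e
  have hexp : (1 - 1/(k:ℝ))^k ≤ 1 / Real.exp 1 := by
    have h1 : 1 - 1/(k:ℝ) ≤ Real.exp (-(1/(k:ℝ))) := by
      have := Real.add_one_le_exp (-(1/(k:ℝ)))
      linarith
    have h2 : (1 - 1/(k:ℝ))^k ≤ (Real.exp (-(1/(k:ℝ))))^k :=
      pow_le_pow_left₀ hcnn h1 k
    have h3 : (Real.exp (-(1/(k:ℝ))))^k = Real.exp ((k:ℝ) * (-(1/(k:ℝ)))) :=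
      (Real.exp_nat_mul _ k).symm
    have h4 : (k:ℝ) * (-(1/(k:ℝ))) = -1 := by
      field_simp
    rw [h3, h4, Real.exp_neg] at h2
    simpa [one_div] using h2
  have : (1 - 1 / Real.exp 1) * f T ≤ (1 - (1 - 1 / (k:ℝ)) ^ k) * f T := by
    apply mul_le_mul_of_nonneg_right _ hTnn
    linarith
  linarith
end

section
/- Let X : ℕ → ℝ be a stochastic process adapted to a filtration on a probability space, with 0 ≤ X t ≤ B almost surely, E[X (t+1) − X t | F t] ≥ 0 (sub-martingale), and Var[X (t+1) | F t] ≥ V > 0 on the event {0 < X t < B}. Let T = inf {t | X t = 0 ∨ X t = B} (interpreted via the stopped process). Then E[T] ≤ B² / V. -/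
/-!
On the event `E n` that `X` has not hit `{0, B}` by time `n`, the variance bound and the
submartingale inequality `0 ≤ X n ≤ E[X (n+1) | ℱ n]` give
`V ≤ E[X (n+1)² | ℱ n] - E[X (n+1) | ℱ n]² ≤ E[X (n+1)² | ℱ n] - X n²`, hence
`V · P(E n) ≤ ∫_{E n} (X (n+1)² - X n²)`. The events `E n` decrease, so summed over `n < N` these
integrands telescope pathwise to some `X k² - X 0² ≤ B²`. Therefore `V ∑ₙ P(E n) ≤ B²`, while
`E[T] = ∑ₙ P(T > n) ≤ ∑ₙ P(E n)`.
-/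

open MeasureTheory ProbabilityTheory Finset
open scoped ENNReal

lemma exists_sum_range_ite_sub_eq {M : Type*} [AddCommGroup M] {p : ℕ → Prop} [DecidablePred p]
    (hp : Antitone p) (a : ℕ → M) (N : ℕ) :
    ∃ k, ∑ n ∈ range N, (if p n then a (n + 1) - a n else 0) = a k - a 0 := by
  induction N with
  | zero => exact ⟨0, by simp⟩
  | succ N ih =>
    by_cases hN : p N
    · refine ⟨N + 1, ?_⟩
      rw [← sum_range_sub]
      exact sum_congr rfl fun n hn => if_pos (hp (Nat.lt_succ_iff.1 (mem_range.1 hn)) hN)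
    · obtain ⟨k, hk⟩ := ih
      exact ⟨k, by rw [sum_range_succ, hk, if_neg hN, add_zero]⟩

section

variable {Ω β : Type*} {m0 : MeasurableSpace Ω} {μ : Measure Ω}

def survivalSet (X : ℕ → Ω → β) (A : Set β) (n : ℕ) : Set Ω := {ω | ∀ s ≤ n, X s ω ∉ A}

lemma survivalSet_antitone (X : ℕ → Ω → β) (A : Set β) : Antitone (survivalSet X A) :=
  fun _ _ hmn _ hω s hs => hω s (hs.trans hmn)

lemma measurableSet_survivalSet [MeasurableSpace β] {ℱ : Filtration ℕ m0} {X : ℕ → Ω → β}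
    {A : Set β} (hX : Adapted ℱ X) (hA : MeasurableSet A) (n : ℕ) :
    MeasurableSet[ℱ n] (survivalSet X A n) := by
  simp only [survivalSet, Set.ofPred_forall]
  exact .iInter fun s => .iInter fun hs => ((hX s).mono (ℱ.mono hs) le_rfl) hA.compl

lemma mem_survivalSet_of_lt_sInf {X : ℕ → Ω → β} {A : Set β} {ω : Ω} {n : ℕ}
    (h : n < sInf {t | X t ω ∈ A}) : ω ∈ survivalSet X A n :=
  fun _ hs hsA => (Nat.sInf_le hsA).not_gt (hs.trans_lt h)

lemma mul_measureReal_le_setIntegral_sq_sub_sq {m : MeasurableSpace Ω} [IsFiniteMeasure μ]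
    (hm : m ≤ m0) {X Y : Ω → ℝ} {s : Set Ω} {V : ℝ} (hs : MeasurableSet[m] s)
    (hX : MemLp X 2 μ) (hY : MemLp Y 2 μ) (hX0 : 0 ≤ᵐ[μ] X) (hXY : X ≤ᵐ[μ] μ[Y | m])
    (hV : ∀ᵐ ω ∂μ, ω ∈ s → V ≤ Var[Y; μ | m] ω) :
    V * μ.real s ≤ ∫ ω in s, (Y ω ^ 2 - X ω ^ 2) ∂μ := by
  have hs0 : MeasurableSet[m0] s := hm s hs
  have hM : Integrable (fun ω => (μ[Y | m]) ω ^ 2) μ := (hY.condExp one_le_two).integrable_sq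
  have hXM : ∫ ω in s, X ω ^ 2 ∂μ ≤ ∫ ω in s, (μ[Y | m]) ω ^ 2 ∂μ :=
    setIntegral_mono_ae_restrict hX.integrable_sq.integrableOn hM.integrableOn <|
      ae_restrict_of_ae <| by
        filter_upwards [hX0, hXY] with ω h0 h using pow_le_pow_left₀ h0 h 2
  calc V * μ.real s = ∫ _ in s, V ∂μ := by simp [mul_comm]
    _ ≤ ∫ ω in s, Var[Y; μ | m] ω ∂μ :=
        setIntegral_mono_ae_restrict (integrableOn_const (measure_ne_top μ s))
          integrable_condVar.integrableOn ((ae_restrict_iff' hs0).2 hV)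
    _ = ∫ ω in s, ((μ[Y ^ 2 | m]) ω - (μ[Y | m]) ω ^ 2) ∂μ :=
        setIntegral_congr_ae hs0 <| by
          filter_upwards [condVar_ae_eq_condExp_sq_sub_sq_condExp hm hY] with ω h _ using h
    _ = ∫ ω in s, Y ω ^ 2 ∂μ - ∫ ω in s, (μ[Y | m]) ω ^ 2 ∂μ := by
        rw [integral_sub integrable_condExp.integrableOn hM.integrableOn,
          setIntegral_condExp (f := Y ^ 2) hm hY.integrable_sq hs]
        rfl
    _ ≤ ∫ ω in s, Y ω ^ 2 ∂μ - ∫ ω in s, X ω ^ 2 ∂μ := sub_le_sub_left hXM _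
    _ = ∫ ω in s, (Y ω ^ 2 - X ω ^ 2) ∂μ :=
        (integral_sub hY.integrable_sq.integrableOn hX.integrable_sq.integrableOn).symm

lemma sum_setIntegral_sub_le [IsProbabilityMeasure μ] {Y : ℕ → Ω → ℝ} {E : ℕ → Set Ω} {C : ℝ}
    (hE : Antitone E) (hEm : ∀ n, MeasurableSet (E n)) (hY : ∀ n, Integrable (Y n) μ)
    (hYC : ∀ᵐ ω ∂μ, 0 ≤ Y 0 ω ∧ ∀ n, Y n ω ≤ C) (N : ℕ) :
    ∑ n ∈ range N, ∫ ω in E n, (Y (n + 1) ω - Y n ω) ∂μ ≤ C := by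
  classical
  have hint : ∀ n, Integrable ((E n).indicator fun ω => Y (n + 1) ω - Y n ω) μ :=
    fun n => ((hY _).sub (hY n)).indicator (hEm n)
  calc ∑ n ∈ range N, ∫ ω in E n, (Y (n + 1) ω - Y n ω) ∂μ
      = ∫ ω, ∑ n ∈ range N, (E n).indicator (fun ω => Y (n + 1) ω - Y n ω) ω ∂μ := by
        rw [integral_finsetSum _ fun n _ => hint n]
        exact sum_congr rfl fun n _ => (integral_indicator (hEm n)).symm
    _ ≤ ∫ _, C ∂μ := by
        refine integral_mono_ae (integrable_finsetSum _ fun n _ => hint n) (integrable_const C) ?_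
        filter_upwards [hYC] with ω ⟨h0, hC⟩
        obtain ⟨k, hk⟩ := exists_sum_range_ite_sub_eq (p := (ω ∈ E ·))
          (fun _ _ hmn h => hE hmn h) (Y · ω) N
        simp only [Set.indicator_apply, hk]
        linarith [hC k]
    _ = C := by simp

lemma integral_natCast_le_of_sum_measureReal_le [IsFiniteMeasure μ] {T : Ω → ℕ}
    {E : ℕ → Set Ω} {C : ℝ} (hEm : ∀ n, MeasurableSet (E n)) (hTE : ∀ n ω, n < T ω → ω ∈ E n)
    (hC : ∀ N, ∑ n ∈ range N, μ.real (E n) ≤ C) : ∫ ω, (T ω : ℝ) ∂μ ≤ C := by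
  have hC0 : 0 ≤ C := by simpa using hC 0
  by_cases hT : Integrable (fun ω => (T ω : ℝ)) μ
  swap
  · rw [integral_undef hT]; exact hC0
  have hlint : ∫⁻ ω, (T ω : ℝ≥0∞) ∂μ ≤ ∑' n, μ (E n) := calc
    ∫⁻ ω, (T ω : ℝ≥0∞) ∂μ ≤ ∫⁻ ω, ∑' n, (E n).indicator (fun _ => 1) ω ∂μ := lintegral_mono fun ω => calc
      (T ω : ℝ≥0∞) = ∑ n ∈ range (T ω), (E n).indicator (fun _ => 1) ω := by
          rw [sum_congr rfl fun n hn => Set.indicator_of_mem (hTE n ω (mem_range.1 hn)) _]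
          simp
      _ ≤ ∑' n, (E n).indicator (fun _ => 1) ω := ENNReal.sum_le_tsum _
    _ = ∑' n, μ (E n) := by
        rw [lintegral_tsum fun n => (measurable_const.indicator (hEm n)).aemeasurable]
        simp [lintegral_indicator (hEm _)]
  rw [integral_eq_lintegral_of_nonneg_ae (ae_of_all _ fun ω => Nat.cast_nonneg _)
    hT.aestronglyMeasurable]
  simp only [ENNReal.ofReal_natCast]
  refine ENNReal.toReal_le_of_le_ofReal hC0 (hlint.trans (ENNReal.tsum_le_of_sum_range_le ?_))
  intro N
  rw [ENNReal.le_ofReal_iff_toReal_le (ENNReal.sum_ne_top.2 fun n _ => measure_ne_top μ _) hC0,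
    ENNReal.toReal_sum fun n _ => measure_ne_top μ _]
  exact hC N

end

theorem stmt_13_general {Ω : Type*} {m0 : MeasurableSpace Ω}
    (μ : Measure Ω) [IsProbabilityMeasure μ]
    (ℱ : Filtration ℕ m0) (X : ℕ → Ω → ℝ)
    (hadapted : Adapted ℱ X)
    (B V : ℝ) (hV : 0 < V)
    (hbound : ∀ t, ∀ᵐ ω ∂μ, 0 ≤ X t ω ∧ X t ω ≤ B)
    (hsubmart : ∀ t, 0 ≤ᵐ[μ] μ[X (t + 1) - X t | ℱ t])
    (hvar : ∀ t, ∀ᵐ ω ∂μ, (0 < X t ω ∧ X t ω < B) →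
      V ≤ (μ[fun ω' => (X (t + 1) ω' - (μ[X (t + 1) | ℱ t]) ω') ^ 2 | ℱ t]) ω)
    (T : Ω → ℕ)
    (hT : ∀ ω, T ω = sInf {t | X t ω = 0 ∨ X t ω = B}) :
    ∫ ω, (T ω : ℝ) ∂μ ≤ B ^ 2 / V := by
  let E := survivalSet X {0, B}
  have hEm n : MeasurableSet[ℱ n] (E n) :=
    measurableSet_survivalSet hadapted ((measurableSet_singleton B).insert 0) n
  have hL2 t : MemLp (X t) 2 μ :=
    memLp_of_bounded (hbound t) ((hadapted t).mono (ℱ.le t) le_rfl).aestronglyMeasurable 2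
  have hsub : Submartingale X ℱ μ := submartingale_of_condExp_sub_nonneg_nat
    hadapted.stronglyAdapted (fun t => (hL2 t).integrable one_le_two) hsubmart
  have hstep n : V * μ.real (E n) ≤ ∫ ω in E n, (X (n + 1) ω ^ 2 - X n ω ^ 2) ∂μ := by
    refine mul_measureReal_le_setIntegral_sq_sub_sq (ℱ.le n) (hEm n) (hL2 n) (hL2 (n + 1))
      ((hbound n).mono fun _ h => h.1) (hsub.ae_le_condExp n.le_succ) ?_
    filter_upwards [hvar n, hbound n] with ω hv ⟨h0, hB⟩ hω
    have hne := hω n le_rfl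
    exact hv ⟨h0.lt_of_ne fun h => hne (.inl h.symm), hB.lt_of_ne fun h => hne (.inr h)⟩
  refine integral_natCast_le_of_sum_measureReal_le (fun n => ℱ.le n _ (hEm n))
    (fun n ω h => mem_survivalSet_of_lt_sInf (by rwa [hT ω] at h)) fun N => ?_
  rw [le_div_iff₀ hV, mul_comm, mul_sum]
  refine (sum_le_sum fun n _ => hstep n).trans <| sum_setIntegral_sub_le
    (survivalSet_antitone _ _) (fun n => ℱ.le n _ (hEm n)) (fun t => (hL2 t).integrable_sq) ?_ N
  filter_upwards [ae_all_iff.2 hbound] with ω h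
  exact ⟨sq_nonneg _, fun n => pow_le_pow_left₀ (h n).1 (h n).2 2⟩

theorem stmt_13 {Ω : Type*} {m0 : MeasurableSpace Ω}
    (μ : Measure Ω) [IsProbabilityMeasure μ]
    (ℱ : Filtration ℕ m0) (X : ℕ → Ω → ℝ)
    (hadapted : Adapted ℱ X)
    (hint : ∀ t, Integrable (X t) μ)
    (B V : ℝ) (hB : 0 < B) (hV : 0 < V)
    (hbound : ∀ t, ∀ᵐ ω ∂μ, 0 ≤ X t ω ∧ X t ω ≤ B)
    (hsubmart : ∀ t, 0 ≤ᵐ[μ] μ[X (t + 1) - X t | ℱ t])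
    (hvar : ∀ t, ∀ᵐ ω ∂μ, (0 < X t ω ∧ X t ω < B) →
      V ≤ (μ[fun ω' => (X (t + 1) ω' - (μ[X (t + 1) | ℱ t]) ω') ^ 2 | ℱ t]) ω)
    (T : Ω → ℕ)
    (hT : ∀ ω, T ω = sInf {t | X t ω = 0 ∨ X t ω = B}) :
    ∫ ω, (T ω : ℝ) ∂μ ≤ B ^ 2 / V :=
  stmt_13_general μ ℱ X hadapted B V hV hbound hsubmart hvar T hT
end

section
/- Let n ≥ 2 and let p : Fin n → Fin n → ℝ be nonnegative with row sums 1, and let x, λ : Fin n → ℝ with x i ∈ {0, 1} and λ i ∈ {0, 1} for all i, and let x̄ = (1/n) ∑ i, λ i * x i. Then (1/n) ∑ i, ∑ j, (λ i * x i − x̄) * p i j * (x i − x j) * π j = (1/n) ∑ i, ∑ j, λ i * p i j * π j * x i * (1 − x j), whenever π : Fin n → ℝ satisfies π i = (1 − ∑ j, p j i) * π i + ∑ j, p i j * π j for all i. -/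
theorem stmt_15 (n : ℕ) (hn : 2 ≤ n)
    (p : Fin n → Fin n → ℝ)
    (hp : ∀ i j, 0 ≤ p i j) (hrow : ∀ i, ∑ j, p i j = 1)
    (x lam : Fin n → ℝ)
    (hx : ∀ i, x i = 0 ∨ x i = 1) (hlam : ∀ i, lam i = 0 ∨ lam i = 1)
    (xbar : ℝ) (hxbar : xbar = (1 / (n : ℝ)) * ∑ i, lam i * x i)
    (π : Fin n → ℝ)
    (hπ : ∀ i, π i = (1 - ∑ j, p j i) * π i + ∑ j, p i j * π j) :
    (1 / (n : ℝ)) * ∑ i, ∑ j, (lam i * x i - xbar) * p i j * (x i - x j) * π j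
      = (1 / (n : ℝ)) * ∑ i, ∑ j, lam i * p i j * π j * x i * (1 - x j) := by
  have key : ∀ i, ∑ j, p i j * π j = π i * ∑ j, p j i := by
    intro i
    have := hπ i
    nlinarith [this]
  have h1 : ∀ i j, (lam i * x i - xbar) * p i j * (x i - x j) * π j
      = lam i * p i j * π j * x i * (1 - x j)
        - xbar * (p i j * (x i * π j) - p i j * (x j * π j)) := by
    intro i j
    rcases hx i with h | h <;> rw [h] <;> ring
  have hA : ∑ i, ∑ j, p i j * (x i * π j) = ∑ i, x i * π i * ∑ j, p j i := by
    refine Finset.sum_congr rfl fun i _ => ?_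
    have e : ∑ j, p i j * (x i * π j) = x i * ∑ j, p i j * π j := by
      rw [Finset.mul_sum]; exact Finset.sum_congr rfl fun j _ => by ring
    rw [e, key i]; ring
  have hB : ∑ i, ∑ j, p i j * (x j * π j) = ∑ i, x i * π i * ∑ j, p j i := by
    rw [Finset.sum_comm]
    refine Finset.sum_congr rfl fun j _ => ?_
    rw [show (∑ i, p i j * (x j * π j)) = (∑ i, p i j) * (x j * π j) from
      (Finset.sum_mul _ _ _).symm]
    ring
  have esum : ∀ i, ∑ j, (lam i * x i - xbar) * p i j * (x i - x j) * π j
      = (∑ j, lam i * p i j * π j * x i * (1 - x j))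
        - xbar * ((∑ j, p i j * (x i * π j)) - ∑ j, p i j * (x j * π j)) := by
    intro i
    rw [show (∑ j, (lam i * x i - xbar) * p i j * (x i - x j) * π j)
        = ∑ j, (lam i * p i j * π j * x i * (1 - x j)
          - xbar * (p i j * (x i * π j) - p i j * (x j * π j)))
      from Finset.sum_congr rfl fun j _ => h1 i j]
    rw [Finset.sum_sub_distrib, ← Finset.mul_sum, Finset.sum_sub_distrib]
  have total : ∑ i, ∑ j, (lam i * x i - xbar) * p i j * (x i - x j) * π j
      = ∑ i, ∑ j, lam i * p i j * π j * x i * (1 - x j) := by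
    rw [show (∑ i, ∑ j, (lam i * x i - xbar) * p i j * (x i - x j) * π j)
        = ∑ i, ((∑ j, lam i * p i j * π j * x i * (1 - x j))
          - xbar * ((∑ j, p i j * (x i * π j)) - ∑ j, p i j * (x j * π j)))
      from Finset.sum_congr rfl fun i _ => esum i]
    rw [Finset.sum_sub_distrib, ← Finset.mul_sum, Finset.sum_sub_distrib, hA, hB]
    ring
  rw [total]
end
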